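/- arXiv:1010.0450 — 3 statements merged into one kernel-verified Lean document; each statement's English description precedes it below -/
import Mathlib

section
/- For every n ≥ 2 and every k ∈ {1,…,n−1}, the ring endomorphism φ_{σ_k} of the algebra Ã⁰ₙ is bijective; that is, φ_{σ_k} is a ring automorphism of Ã⁰ₙ. -/
/-!
STATEMENT 0: For every n ≥ 2 and every k ∈ {1,…,n−1}, the ring endomorphism φ_{σ_k}
of Ã⁰ₙ (the free unital associative algebra over ℤ[μ̃₁^{±1},…,μ̃ₙ^{±1}] on generators
a_{ij}, i ≠ j) is bijective, i.e. it is a ring automorphism.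

We model the Laurent polynomial ring ℤ[μ̃₁^{±1},…,μ̃ₙ^{±1}] as the monoid algebra of
the free abelian group `Fin n → ℤ` over ℤ (`mtZ i z` is the monomial `μ̃ᵢ^z`), and
Ã⁰ₙ as the free algebra over it on the off-diagonal pairs (i,j).  `IsPhiSigma`
records exactly the defining equations for φ_{σ_k} on the generators a_{ij} and on
the coefficients μ̃ᵢ^{±1}; these determine the ring endomorphism uniquely.
(Indices are 0-based: k and k' = k+1 play the roles of k, k+1.)
-/

noncomputable section

abbrev LaurN (N : ℕ) : Type := AddMonoidAlgebra ℤ (Fin N → ℤ)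

/-- the monomial `μ̃ᵢ^z` in `ℤ[μ̃₁^{±1},…,μ̃_N^{±1}]`. -/
def mtZ {N : ℕ} (i : Fin N) (z : ℤ) : LaurN N := AddMonoidAlgebra.single (Pi.single i z) 1

abbrev OffD (N : ℕ) := {p : Fin N × Fin N // p.1 ≠ p.2}

/-- The algebra `Ã⁰_N`: free unital associative algebra over `ℤ[μ̃₁^{±1},…,μ̃_N^{±1}]`
on the generators `a_{ij}`, `i ≠ j`. -/
abbrev Atil (N : ℕ) := FreeAlgebra (LaurN N) (OffD N)

/-- `μ̃ᵢ^z` viewed inside `Ã⁰_N`. -/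
def mtA {N : ℕ} (i : Fin N) (z : ℤ) : Atil N := algebraMap _ _ (mtZ i z)

/-- The generator `a_{ij}` of `Ã⁰_N` (and `0` for the unused case `i = j`). -/
def aG {N : ℕ} (i j : Fin N) : Atil N := if h : i = j then 0 else FreeAlgebra.ι _ ⟨(i,j), h⟩

/-- The defining property of the ring endomorphism `φ_{σ_k}` of `Ã⁰_N`. -/
def IsPhiSigma (N : ℕ) (k : Fin N) (hk : (k : ℕ) + 1 < N) (φ : Atil N →+* Atil N) : Prop :=
  ∃ k' : Fin N, ((k' : ℕ) = (k : ℕ) + 1) ∧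
  ((∀ i j : Fin N, i ≠ k → i ≠ k' → j ≠ k → j ≠ k' → φ (aG i j) = aG i j) ∧
   (φ (aG k k') = - aG k' k) ∧
   (φ (aG k' k) = - (mtA k 1 * mtA k' (-1) * aG k k')) ∧
   (∀ i : Fin N, i ≠ k → i ≠ k' → φ (aG i k') = aG i k) ∧
   (∀ i : Fin N, i ≠ k → i ≠ k' → φ (aG k' i) = aG k i) ∧
   (∀ i : Fin N, i < k → φ (aG i k) = aG i k' - aG i k * aG k k') ∧
   (∀ i : Fin N, k' < i → φ (aG i k) = aG i k' - mtA k 1 * mtA k' (-1) * (aG i k * aG k k')) ∧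
   (∀ i : Fin N, i ≠ k → i ≠ k' → φ (aG k i) = aG k' i - aG k' k * aG k i) ∧
   (φ (mtA k 1) = mtA k' 1) ∧ (φ (mtA k (-1)) = mtA k' (-1)) ∧
   (φ (mtA k' 1) = mtA k 1) ∧ (φ (mtA k' (-1)) = mtA k (-1)) ∧
   (∀ i : Fin N, i ≠ k → i ≠ k' → φ (mtA i 1) = mtA i 1 ∧ φ (mtA i (-1)) = mtA i (-1)))

/-!
The inverse of `φ_{σ_k}` is written down explicitly. It acts on the coefficients by swapping
`μ̃_k` and `μ̃_{k+1}`, so it is only semilinear, and it sends each generator to the solution of the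
defining equations of `φ_{σ_k}` for that generator; for instance `a_{i,k+1}` goes to
`a_{ik} - c a_{i,k+1} a_{k+1,k}` with `c = μ̃_k μ̃_{k+1}⁻¹` for `i < k` and `c = 1` for `i > k+1`.
A ring endomorphism of the free algebra `Ã⁰ₙ` is determined by its values on the `μ̃_i` and the
`a_{ij}`, and on these both composites are the identity by a short noncommutative computation in
which the central factor `μ̃_k μ̃_{k+1}⁻¹` cancels against its image `μ̃_{k+1} μ̃_k⁻¹`.
-/

namespace FreeAlgebra

variable {R X A : Type*} [CommSemiring R] [Semiring A]

theorem ringHom_ext {f g : FreeAlgebra R X →+* A}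
    (h_alg : f.comp (algebraMap R _) = g.comp (algebraMap R _))
    (h_ι : ∀ x, f (ι R x) = g (ι R x)) : f = g := by
  ext a
  induction a using FreeAlgebra.induction with
  | grade0 r => exact RingHom.congr_fun h_alg r
  | grade1 x => exact h_ι x
  | mul a b ha hb => rw [map_mul, map_mul, ha, hb]
  | add a b ha hb => rw [map_add, map_add, ha, hb]

def liftOfRingHom (s : R →+* A) (hs : ∀ r a, s r * a = a * s r) (f : X → A) :
    FreeAlgebra R X →+* A :=
  letI := s.toAlgebra' hs
  (lift R f : FreeAlgebra R X →ₐ[R] A).toRingHom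

variable (s : R →+* A) (hs : ∀ r a, s r * a = a * s r) (f : X → A)

theorem liftOfRingHom_ι (x : X) : liftOfRingHom s hs f (ι R x) = f x :=
  letI := s.toAlgebra' hs
  lift_ι_apply f x

theorem liftOfRingHom_comp_algebraMap :
    (liftOfRingHom s hs f).comp (algebraMap R _) = s := by
  let := s.toAlgebra' hs
  ext r
  exact ((lift R f).commutes r).trans (RingHom.congr_fun (s.algebraMap_toAlgebra' hs) r)

end FreeAlgebra

namespace AddMonoidAlgebra

theorem ringHom_ext_of_single_piSingle_one {ι A : Type*} [Fintype ι] [DecidableEq ι] [Semiring A]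
    {f g : AddMonoidAlgebra ℤ (ι → ℤ) →+* A}
    (h : ∀ i, f (single (Pi.single i 1) 1) = g (single (Pi.single i 1) 1)) : f = g := by
  have single_add (a b : ι → ℤ) : single (a + b) (1 : ℤ) = single a 1 * single b 1 := by
    rw [single_mul_single, mul_one]
  have h_zero : f (single 0 1) = g (single 0 1) := by rw [← one_def, map_one, map_one]
  have h_add {a b : ι → ℤ} (ha : f (single a 1) = g (single a 1))
      (hb : f (single b 1) = g (single b 1)) : f (single (a + b) 1) = g (single (a + b) 1) := by
    rw [single_add, map_mul, map_mul, ha, hb]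
  have h_neg (i : ι) : f (single (Pi.single i (-1)) 1) = g (single (Pi.single i (-1)) 1) := by
    have hinv (φ : AddMonoidAlgebra ℤ (ι → ℤ) →+* A) :
        φ (single (Pi.single i (-1)) 1) * φ (single (Pi.single i 1) 1) = 1 := by
      rw [← map_mul, ← single_add, ← Pi.single_add, neg_add_cancel, Pi.single_zero, ← one_def,
        map_one]
    refine left_inv_eq_right_inv (hinv f) ?_
    rw [h, ← map_mul, ← single_add, ← Pi.single_add, add_neg_cancel, Pi.single_zero, ← one_def,
      map_one]
  have h_int (i : ι) (z : ℤ) : f (single (Pi.single i z) 1) = g (single (Pi.single i z) 1) := by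
    induction z using Int.induction_on with
    | zero => rwa [Pi.single_zero]
    | succ m ih => rw [Pi.single_add]; exact h_add ih (h i)
    | pred m ih => rw [sub_eq_add_neg, Pi.single_add]; exact h_add ih (h_neg i)
  refine ringHom_ext (fun r => RingHom.congr_fun (RingHom.ext_int (f.comp singleZeroRingHom)
    (g.comp singleZeroRingHom)) r) (fun a => ?_)
  rw [← Finset.univ_sum_single a]
  exact Finset.sum_induction _ (fun a => f (single a 1) = g (single a 1)) (fun _ _ => h_add)
    h_zero fun i _ => h_int i (a i)

end AddMonoidAlgebra

namespace PhiSigma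

variable {N : ℕ}

lemma aG_of_ne {i j : Fin N} (h : i ≠ j) : aG i j = FreeAlgebra.ι _ (⟨(i, j), h⟩ : OffD N) :=
  dif_neg h

/- `rw` and `simp` cannot use `mul_neg`, `neg_mul` on `Atil N`: its multiplication is built from
`AddMonoidAlgebra.commSemiring`, the one of its `Ring` structure from `AddMonoidAlgebra.commRing`,
and these agree only up to default transparency. -/
lemma mul_neg' (a b : Atil N) : a * -b = -(a * b) := mul_neg a b

lemma neg_mul' (a b : Atil N) : -a * b = -(a * b) := neg_mul a b

def swapCoeff (k k' : Fin N) : LaurN N →+* LaurN N :=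
  AddMonoidAlgebra.mapDomainRingHom ℤ (LinearMap.funLeft ℤ ℤ (Equiv.swap k k')).toAddMonoidHom

lemma swapCoeff_mtZ (k k' i : Fin N) (z : ℤ) :
    swapCoeff k k' (mtZ i z) = mtZ (Equiv.swap k k' i) z := by
  simp [swapCoeff, mtZ, LinearMap.funLeft, Pi.single_comp_equiv]

lemma laurN_ringHom_ext {A : Type*} [Semiring A] {f g : LaurN N →+* A}
    (h : ∀ i, f (mtZ i 1) = g (mtZ i 1)) : f = g :=
  AddMonoidAlgebra.ringHom_ext_of_single_piSingle_one h

lemma swapCoeff_comp_swapCoeff (k k' : Fin N) :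
    (swapCoeff k k').comp (swapCoeff k k') = RingHom.id _ :=
  laurN_ringHom_ext fun i => by simp [swapCoeff_mtZ]

def muRatio (k k' : Fin N) : Atil N := algebraMap (LaurN N) (Atil N) (mtZ k 1 * mtZ k' (-1))

lemma mtA_mul_mtA_neg_one (k k' : Fin N) : mtA k 1 * mtA k' (-1) = muRatio k k' :=
  (map_mul _ _ _).symm

lemma mul_muRatio_mul (k k' : Fin N) (x y : Atil N) :
    x * (muRatio k k' * y) = muRatio k k' * (x * y) :=
  Algebra.left_comm _ _ _

lemma muRatio_mul_muRatio_mul (k k' : Fin N) (x : Atil N) :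
    muRatio k' k * (muRatio k k' * x) = x := by
  have h (i : Fin N) : mtZ i 1 * mtZ i (-1) = 1 := by
    rw [mtZ, mtZ, AddMonoidAlgebra.single_mul_single, ← Pi.single_add, add_neg_cancel,
      Pi.single_zero, mul_one]
    rfl
  rw [muRatio, muRatio, ← mul_assoc, ← map_mul, mul_mul_mul_comm, mul_comm (mtZ k (-1)),
    mul_mul_mul_comm, h, h, mul_one, map_one, one_mul]

lemma map_muRatio {k k' : Fin N} {f : Atil N →+* Atil N}
    (hf : f.comp (algebraMap _ _) = (algebraMap _ _).comp (swapCoeff k k')) :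
    f (muRatio k k') = muRatio k' k := by
  rw [muRatio, ← RingHom.comp_apply, hf, RingHom.comp_apply, map_mul, swapCoeff_mtZ,
    swapCoeff_mtZ, Equiv.swap_apply_left, Equiv.swap_apply_right, muRatio]

def phiSigmaInvGen (k k' i j : Fin N) : Atil N :=
  if j = k then (if i = k' then -aG k k' else aG i k')
  else if j = k' then
    (if i = k then -(muRatio k k' * aG k' k)
     else if i < k then aG i k - muRatio k k' * (aG i k' * aG k' k)
     else aG i k - aG i k' * aG k' k)
  else if i = k then aG k' j
  else if i = k' then aG k j - aG k k' * aG k' j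
  else aG i j

def phiSigmaInv (k k' : Fin N) : Atil N →+* Atil N :=
  FreeAlgebra.liftOfRingHom ((algebraMap _ _).comp (swapCoeff k k'))
    (fun _ _ => Algebra.commutes _ _) fun p => phiSigmaInvGen k k' p.1.1 p.1.2

lemma phiSigmaInv_comp_algebraMap (k k' : Fin N) :
    (phiSigmaInv k k').comp (algebraMap _ _) = (algebraMap _ _).comp (swapCoeff k k') :=
  FreeAlgebra.liftOfRingHom_comp_algebraMap _ _ _

lemma phiSigmaInv_aG (k k' : Fin N) {i j : Fin N} (h : i ≠ j) :
    phiSigmaInv k k' (aG i j) = phiSigmaInvGen k k' i j := by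
  rw [aG_of_ne h, phiSigmaInv, FreeAlgebra.liftOfRingHom_ι]

variable {k k' : Fin N}

lemma phiSigmaInv_aG_k_k' (hlt : k < k') :
    phiSigmaInv k k' (aG k k') = -(muRatio k k' * aG k' k) := by
  simp [phiSigmaInv_aG _ _ hlt.ne, phiSigmaInvGen, hlt.ne']

lemma phiSigmaInv_aG_k'_k (hlt : k < k') : phiSigmaInv k k' (aG k' k) = -aG k k' := by
  simp [phiSigmaInv_aG _ _ hlt.ne', phiSigmaInvGen]

lemma phiSigmaInv_aG_i_k {i : Fin N} (hik : i ≠ k) (hik' : i ≠ k') :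
    phiSigmaInv k k' (aG i k) = aG i k' := by
  simp [phiSigmaInv_aG _ _ hik, phiSigmaInvGen, hik']

lemma phiSigmaInv_aG_k_j {j : Fin N} (hjk : j ≠ k) (hjk' : j ≠ k') :
    phiSigmaInv k k' (aG k j) = aG k' j := by
  simp [phiSigmaInv_aG _ _ hjk.symm, phiSigmaInvGen, hjk, hjk']

lemma phiSigmaInv_aG_i_k'_of_lt (hlt : k < k') {i : Fin N} (hik : i < k) :
    phiSigmaInv k k' (aG i k') = aG i k - muRatio k k' * (aG i k' * aG k' k) := by
  simp [phiSigmaInv_aG _ _ (hik.trans hlt).ne, phiSigmaInvGen, hik, hik.ne, hlt.ne']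

lemma phiSigmaInv_aG_i_k'_of_gt (hlt : k < k') {i : Fin N} (hik' : k' < i) :
    phiSigmaInv k k' (aG i k') = aG i k - aG i k' * aG k' k := by
  simp [phiSigmaInv_aG _ _ hik'.ne', phiSigmaInvGen, (hlt.trans hik').ne', hlt.ne',
    (hlt.trans hik').not_gt]

lemma phiSigmaInv_aG_k'_j (hlt : k < k') {j : Fin N} (hjk : j ≠ k) (hjk' : j ≠ k') :
    phiSigmaInv k k' (aG k' j) = aG k j - aG k k' * aG k' j := by
  simp [phiSigmaInv_aG _ _ hjk'.symm, phiSigmaInvGen, hjk, hjk', hlt.ne']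

lemma phiSigmaInv_aG_of_ne {i j : Fin N} (hij : i ≠ j) (hik : i ≠ k) (hik' : i ≠ k')
    (hjk : j ≠ k) (hjk' : j ≠ k') : phiSigmaInv k k' (aG i j) = aG i j := by
  simp [phiSigmaInv_aG _ _ hij, phiSigmaInvGen, hik, hik', hjk, hjk']

lemma lt_or_lt_of_ne_of_ne_succ (hk' : (k' : ℕ) = k + 1) {i : Fin N} (hik : i ≠ k)
    (hik' : i ≠ k') : i < k ∨ k' < i := by
  rw [Fin.lt_def, Fin.lt_def]
  rw [Ne, Fin.ext_iff] at hik hik'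
  omega

end PhiSigma

namespace IsPhiSigma

open PhiSigma

variable {N : ℕ} {k : Fin N} {hk : (k : ℕ) + 1 < N} {φ : Atil N →+* Atil N}

lemma comp_algebraMap (hφ : IsPhiSigma N k hk φ) :
    φ.comp (algebraMap _ _) = (algebraMap _ _).comp (swapCoeff k ⟨k + 1, hk⟩) := by
  obtain ⟨k', hk', -, -, -, -, -, -, -, -, h_k, -, h_k', -, h_other⟩ := hφ
  obtain rfl : k' = ⟨k + 1, hk⟩ := Fin.ext hk'
  refine laurN_ringHom_ext fun i => ?_
  rw [RingHom.comp_apply, RingHom.comp_apply, swapCoeff_mtZ]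
  change φ (mtA i 1) = mtA _ 1
  rcases eq_or_ne i k with rfl | hik
  · rwa [Equiv.swap_apply_left]
  rcases eq_or_ne i ⟨k + 1, hk⟩ with rfl | hik'
  · rwa [Equiv.swap_apply_right]
  rw [Equiv.swap_apply_of_ne_of_ne hik hik']
  exact (h_other i hik hik').1

lemma phiSigmaInv_apply_aG (hφ : IsPhiSigma N k hk φ) {i j : Fin N} (hij : i ≠ j) :
    phiSigmaInv k ⟨k + 1, hk⟩ (φ (aG i j)) = aG i j := by
  obtain ⟨k', hk', h_out, h_kk', h_k'k, h_ik', h_k'i, h_ik_lt, h_ik_gt, h_ki, -⟩ := hφ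
  obtain rfl : k' = ⟨k + 1, hk⟩ := Fin.ext hk'
  set k' : Fin N := ⟨k + 1, hk⟩
  have hlt : k < k' := Fin.lt_def.2 (by simp [k'])
  have hq := map_muRatio (phiSigmaInv_comp_algebraMap k k')
  simp only [mtA_mul_mtA_neg_one] at h_k'k h_ik_gt
  rcases eq_or_ne j k with hjk | hjk
  · subst j
    rcases eq_or_ne i k' with hik' | hik'
    · subst i
      simp only [h_k'k, map_neg, map_mul, hq, phiSigmaInv_aG_k_k' hlt, mul_neg',
        muRatio_mul_muRatio_mul, neg_neg]
    rcases lt_or_lt_of_ne_of_ne_succ hk' hij hik' with hi | hi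
    · simp only [h_ik_lt i hi, map_sub, map_mul, phiSigmaInv_aG_i_k'_of_lt hlt hi,
        phiSigmaInv_aG_i_k hij hik', phiSigmaInv_aG_k_k' hlt, mul_neg', mul_muRatio_mul,
        sub_neg_eq_add, sub_add_cancel]
    · rw [h_ik_gt i hi, map_sub, map_mul, map_mul, hq, phiSigmaInv_aG_i_k'_of_gt hlt hi,
        phiSigmaInv_aG_i_k hij hik', phiSigmaInv_aG_k_k' hlt, mul_neg', mul_muRatio_mul,
        mul_neg', muRatio_mul_muRatio_mul, sub_neg_eq_add, sub_add_cancel]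
  rcases eq_or_ne j k' with hjk' | hjk'
  · subst j
    rcases eq_or_ne i k with hik | hik
    · subst i
      simp only [h_kk', map_neg, phiSigmaInv_aG_k'_k hlt, neg_neg]
    · rw [h_ik' i hik hij, phiSigmaInv_aG_i_k hik hij]
  rcases eq_or_ne i k with hik | hik
  · subst i
    simp only [h_ki j hjk hjk', map_sub, map_mul, phiSigmaInv_aG_k'_j hlt hjk hjk',
      phiSigmaInv_aG_k'_k hlt, phiSigmaInv_aG_k_j hjk hjk', neg_mul', sub_neg_eq_add,
      sub_add_cancel]
  rcases eq_or_ne i k' with hik' | hik'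
  · subst i
    rw [h_k'i j hjk hjk', phiSigmaInv_aG_k_j hjk hjk']
  rw [h_out i j hik hik' hjk hjk', phiSigmaInv_aG_of_ne hij hik hik' hjk hjk']

lemma apply_phiSigmaInv_aG (hφ : IsPhiSigma N k hk φ) {i j : Fin N} (hij : i ≠ j) :
    φ (phiSigmaInv k ⟨k + 1, hk⟩ (aG i j)) = aG i j := by
  have hq := map_muRatio hφ.comp_algebraMap
  obtain ⟨k', hk', h_out, h_kk', h_k'k, h_ik', h_k'i, h_ik_lt, h_ik_gt, h_ki, -⟩ := hφ
  obtain rfl : k' = ⟨k + 1, hk⟩ := Fin.ext hk'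
  set k' : Fin N := ⟨k + 1, hk⟩
  have hlt : k < k' := Fin.lt_def.2 (by simp [k'])
  simp only [mtA_mul_mtA_neg_one] at h_k'k h_ik_gt
  rcases eq_or_ne j k with hjk | hjk
  · subst j
    rcases eq_or_ne i k' with hik' | hik'
    · subst i
      rw [phiSigmaInv_aG_k'_k hlt, map_neg, h_kk', neg_neg]
    · rw [phiSigmaInv_aG_i_k hij hik', h_ik' i hij hik']
  rcases eq_or_ne j k' with hjk' | hjk'
  · subst j
    rcases eq_or_ne i k with hik | hik
    · subst i
      simp only [phiSigmaInv_aG_k_k' hlt, map_neg, map_mul, hq, h_k'k, mul_neg',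
        muRatio_mul_muRatio_mul, neg_neg]
    rcases lt_or_lt_of_ne_of_ne_succ hk' hik hij with hi | hi
    · rw [phiSigmaInv_aG_i_k'_of_lt hlt hi, map_sub, map_mul, map_mul, hq, h_ik_lt i hi,
        h_ik' i hik hij, h_k'k, mul_neg', mul_muRatio_mul, mul_neg', muRatio_mul_muRatio_mul,
        sub_neg_eq_add, sub_add_cancel]
    · simp only [phiSigmaInv_aG_i_k'_of_gt hlt hi, map_sub, map_mul, h_ik_gt i hi,
        h_ik' i hik hij, h_k'k, mul_neg', mul_muRatio_mul, sub_neg_eq_add, sub_add_cancel]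
  rcases eq_or_ne i k with hik | hik
  · subst i
    rw [phiSigmaInv_aG_k_j hjk hjk', h_k'i j hjk hjk']
  rcases eq_or_ne i k' with hik' | hik'
  · subst i
    simp only [phiSigmaInv_aG_k'_j hlt hjk hjk', map_sub, map_mul, h_ki j hjk hjk', h_kk',
      h_k'i j hjk hjk', neg_mul', sub_neg_eq_add, sub_add_cancel]
  rw [phiSigmaInv_aG_of_ne hij hik hik' hjk hjk', h_out i j hik hik' hjk hjk']

lemma phiSigmaInv_comp (hφ : IsPhiSigma N k hk φ) :
    (phiSigmaInv k ⟨k + 1, hk⟩).comp φ = RingHom.id _ := by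
  refine FreeAlgebra.ringHom_ext ?_ fun ⟨(i, j), hij⟩ => ?_
  · rw [RingHom.comp_assoc, hφ.comp_algebraMap, ← RingHom.comp_assoc,
      phiSigmaInv_comp_algebraMap, RingHom.comp_assoc, swapCoeff_comp_swapCoeff]
    rfl
  · rw [← aG_of_ne hij]
    exact hφ.phiSigmaInv_apply_aG hij

lemma comp_phiSigmaInv (hφ : IsPhiSigma N k hk φ) :
    φ.comp (phiSigmaInv k ⟨k + 1, hk⟩) = RingHom.id _ := by
  refine FreeAlgebra.ringHom_ext ?_ fun ⟨(i, j), hij⟩ => ?_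
  · rw [RingHom.comp_assoc, phiSigmaInv_comp_algebraMap, ← RingHom.comp_assoc,
      hφ.comp_algebraMap, RingHom.comp_assoc, swapCoeff_comp_swapCoeff]
    rfl
  · rw [← aG_of_ne hij]
    exact hφ.apply_phiSigmaInv_aG hij

end IsPhiSigma

theorem phi_sigma_bijective_general (n : ℕ) (k : Fin n) (hk : (k : ℕ) + 1 < n)
    (φ : Atil n →+* Atil n) (hφ : IsPhiSigma n k hk φ) :
    Function.Bijective φ :=
  (RingEquiv.ofRingHom φ _ hφ.comp_phiSigmaInv hφ.phiSigmaInv_comp).bijective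

/-- For n ≥ 2 and 1 ≤ k ≤ n−1, the ring endomorphism `φ_{σ_k}` of
`Ã⁰ₙ` is bijective, i.e. a ring automorphism. -/
theorem phi_sigma_bijective (n : ℕ) (hn : 2 ≤ n) (k : Fin n) (hk : (k : ℕ) + 1 < n)
    (φ : Atil n →+* Atil n) (hφ : IsPhiSigma n k hk φ) :
    Function.Bijective φ :=
  phi_sigma_bijective_general n k hk φ hφ
end
end

section
/- Fix δ > 0 and d ≥ 0. Let K(s), s ∈ B^d(1) (the closed d-dimensional unit ball), be a continuous family (in the C¹ topology) of C¹ embeddings of a fixed closed 1-manifold into R³, each transverse to ξ₀, such that K(s) has image contained in B(δ) for all s ∈ ∂B^d(1). Then there is a continuous homotopy K(s,t), 0 ≤ t ≤ 1, through embeddings transverse to ξ₀, with K(s,0) = K(s) for all s, K(s,t) = K(s) for all s ∈ ∂B^d(1) and all t, and K(s,1) contained in B(δ) for every s ∈ B^d(1). -/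
/-!
STATEMENT 12: Fix δ > 0 and d ≥ 0.  Let K(s), s ∈ B^d(1), be a continuous family (in
the C¹ topology) of C¹ embeddings of a fixed closed 1-manifold into ℝ³, each
transverse to ξ₀, with K(s) ⊂ B(δ) for s ∈ ∂B^d(1).  Then there is a continuous
homotopy K(s,t), 0 ≤ t ≤ 1, through embeddings transverse to ξ₀, with K(s,0) = K(s),
K(s,t) = K(s) for s ∈ ∂B^d(1), and K(s,1) ⊂ B(δ) for all s.

Model: the closed 1-manifold is a disjoint union of m circles, parametrized as
1-periodic maps ℝ → ℝ³ indexed by `Fin m`; "continuous family in the C¹ topology"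
is encoded as joint continuity of the map and of its t-derivative; "embedding" as
injectivity up to deck transformations; B(δ) is the Euclidean ball
x₁² + x₂² + x₃² ≤ δ²; transversality to ξ₀ is `alph (K ...) (K' ...) ≠ 0` with
α₀ = dx₃ − x₂dx₁ + x₁dx₂.
-/

noncomputable section

def alph (x v : Fin 3 → ℝ) : ℝ := v 2 - x 1 * v 0 + x 0 * v 1

abbrev Bd (d : ℕ) := Metric.closedBall (0 : EuclideanSpace ℝ (Fin d)) 1

def inBall (δ : ℝ) (x : Fin 3 → ℝ) : Prop := (x 0)^2 + (x 1)^2 + (x 2)^2 ≤ δ^2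

/-! The homotopy is `F_{c(s,τ)} ∘ K(g(s,τ))`. The reparametrisation `g(s,τ)` is the radial
retraction of `(1 + τ) s` onto the unit ball: it fixes the boundary sphere and at `τ = 1` pushes
the shell `‖s‖ ≥ 1/2` onto the sphere, where the links already lie in `B(δ)`. The factor
`c ≤ 1` is `1` at `τ = 0` and on the sphere, and at `τ = 1` it is, on `‖s‖ ≤ 1/2`, a constant
`c₁` small enough that `F_{c₁}` maps the compact image of the whole family into `B(δ)`.
Since `F_c` is linear, injective and satisfies `F_c^* α₀ = c α₀`, every stage is a family of
transverse embeddings. -/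

def contactScaling (c : ℝ) (x : Fin 3 → ℝ) : Fin 3 → ℝ := ![√c, √c, c] * x

section contactScaling

variable {c : ℝ}

theorem alph_contactScaling (hc : 0 ≤ c) (x v : Fin 3 → ℝ) :
    alph (contactScaling c x) (contactScaling c v) = c * alph x v := by
  have hsq : √c * √c = c := Real.mul_self_sqrt hc
  simp only [alph, contactScaling, Pi.mul_apply, Matrix.cons_val]
  linear_combination (x 0 * v 1 - x 1 * v 0) * hsq

theorem contactScaling_injective (hc : 0 < c) : Function.Injective (contactScaling c) := by
  intro x y h
  have hs : √c ≠ 0 := (Real.sqrt_pos.mpr hc).ne'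
  funext i
  have hi := congrFun h i
  fin_cases i <;> simp_all [contactScaling, hc.ne']

@[simp]
theorem contactScaling_one (x : Fin 3 → ℝ) : contactScaling 1 x = x := by
  funext i
  fin_cases i <;> simp [contactScaling]

theorem continuous_contactScaling :
    Continuous fun p : ℝ × (Fin 3 → ℝ) => contactScaling p.1 p.2 := by
  refine Continuous.mul (continuous_pi fun i => ?_) continuous_snd
  fin_cases i <;>
    simp only [Fin.zero_eta, Fin.mk_one, Fin.reduceFinMk, Matrix.cons_val] <;> fun_prop

theorem HasDerivAt.contactScaling {f : ℝ → Fin 3 → ℝ} {f' : Fin 3 → ℝ} {t : ℝ}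
    (hf : HasDerivAt f f' t) :
    HasDerivAt (fun u => contactScaling c (f u)) (contactScaling c f') t :=
  hf.const_mul _

theorem inBall_contactScaling {δ : ℝ} {x : Fin 3 → ℝ} (hc₀ : 0 ≤ c) (hc₁ : c ≤ 1)
    (hx : c * (x 0 ^ 2 + x 1 ^ 2 + x 2 ^ 2) ≤ δ ^ 2) : inBall δ (contactScaling c x) := by
  have hsq : √c ^ 2 = c := Real.sq_sqrt hc₀
  have hc2 : c ^ 2 * x 2 ^ 2 ≤ c * x 2 ^ 2 := by gcongr; nlinarith
  simp only [inBall, contactScaling, Pi.mul_apply, Matrix.cons_val]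
  nlinarith

end contactScaling

section unitBallRetraction

variable {E : Type*} [NormedAddCommGroup E] [NormedSpace ℝ E]

def unitBallRetraction (v : E) : Metric.closedBall (0 : E) 1 :=
  ⟨(max 1 ‖v‖)⁻¹ • v, by
    have h : 0 < max 1 ‖v‖ := lt_max_of_lt_left one_pos
    rw [mem_closedBall_zero_iff, norm_smul, norm_inv, Real.norm_of_nonneg h.le,
      inv_mul_le_one₀ h]
    exact le_max_right _ _⟩

theorem coe_unitBallRetraction_of_norm_le_one {v : E} (hv : ‖v‖ ≤ 1) :
    (unitBallRetraction v : E) = v := by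
  simp [unitBallRetraction, max_eq_left hv]

theorem coe_unitBallRetraction_of_one_le_norm {v : E} (hv : 1 ≤ ‖v‖) :
    (unitBallRetraction v : E) = ‖v‖⁻¹ • v := by
  simp [unitBallRetraction, max_eq_right hv]

@[simp]
theorem unitBallRetraction_coe (s : Metric.closedBall (0 : E) 1) :
    unitBallRetraction (s : E) = s :=
  Subtype.ext (coe_unitBallRetraction_of_norm_le_one (mem_closedBall_zero_iff.mp s.2))

theorem coe_unitBallRetraction_smul_of_norm_eq_one {v : E} (hv : ‖v‖ = 1) {a : ℝ} (ha : 1 ≤ a) :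
    (unitBallRetraction (a • v) : E) = v := by
  have hav : ‖a • v‖ = a := by rw [norm_smul, hv, mul_one, Real.norm_of_nonneg (by linarith)]
  rw [coe_unitBallRetraction_of_one_le_norm (hav.symm ▸ ha), hav, smul_smul,
    inv_mul_cancel₀ (by linarith), one_smul]

theorem norm_unitBallRetraction_of_one_le_norm {v : E} (hv : 1 ≤ ‖v‖) :
    ‖(unitBallRetraction v : E)‖ = 1 := by
  rw [coe_unitBallRetraction_of_one_le_norm hv]
  exact norm_smul_inv_norm (norm_pos_iff.mp (one_pos.trans_le hv))

theorem continuous_unitBallRetraction : Continuous (unitBallRetraction : E → _) :=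
  ((continuous_const.max continuous_norm).inv₀
    fun _ => (lt_max_of_lt_left one_pos).ne').smul continuous_id |>.subtype_mk _

end unitBallRetraction

section shrinkFactor

variable {E : Type*} [NormedAddCommGroup E] {c₁ τ : ℝ} {s : E}

def shrinkFactor (c₁ : ℝ) (s : E) (τ : ℝ) : ℝ :=
  1 - τ * (1 - c₁) * min 1 (2 * (1 - ‖s‖))

@[simp]
theorem shrinkFactor_zero_right (c₁ : ℝ) (s : E) : shrinkFactor c₁ s 0 = 1 := by
  simp [shrinkFactor]

theorem shrinkFactor_of_norm_eq_one (hs : ‖s‖ = 1) : shrinkFactor c₁ s τ = 1 := by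
  simp [shrinkFactor, hs]

theorem shrinkFactor_one_right_of_norm_le_half (hs : ‖s‖ ≤ 1 / 2) :
    shrinkFactor c₁ s 1 = c₁ := by
  rw [shrinkFactor, min_eq_left (by linarith)]
  ring

theorem le_shrinkFactor (hc₁ : c₁ ≤ 1) (hτ : τ ≤ 1) (hs : ‖s‖ ≤ 1) :
    c₁ ≤ shrinkFactor c₁ s τ := by
  have h₀ : 0 ≤ min 1 (2 * (1 - ‖s‖)) := le_min zero_le_one (by linarith)
  have h₁ : min 1 (2 * (1 - ‖s‖)) ≤ 1 := min_le_left _ _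
  rw [shrinkFactor]
  nlinarith [mul_le_mul_of_nonneg_right hτ h₀]

theorem shrinkFactor_le_one (hc₁ : c₁ ≤ 1) (hτ : 0 ≤ τ) (hs : ‖s‖ ≤ 1) :
    shrinkFactor c₁ s τ ≤ 1 := by
  have h₀ : 0 ≤ min 1 (2 * (1 - ‖s‖)) := le_min zero_le_one (by linarith)
  rw [shrinkFactor, sub_le_self_iff]
  exact mul_nonneg (mul_nonneg hτ (by linarith)) h₀

theorem continuous_shrinkFactor (c₁ : ℝ) :
    Continuous fun p : E × ℝ => shrinkFactor c₁ p.1 p.2 := by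
  unfold shrinkFactor
  fun_prop

end shrinkFactor

theorem exists_forall_le_of_periodic {P : Type*} [TopologicalSpace P] [CompactSpace P]
    {f : P → ℝ → ℝ} {T : ℝ} (hT : 0 < T) (hf : Continuous fun p : P × ℝ => f p.1 p.2)
    (hper : ∀ p, Function.Periodic (f p) T) : ∃ M, ∀ p t, f p t ≤ M := by
  obtain ⟨M, hM⟩ := ((isCompact_univ.prod (isCompact_Icc (a := 0) (b := T))).image hf).bddAbove
  refine ⟨M, fun p t => ?_⟩
  obtain ⟨y, hy, hfy⟩ := (hper p).exists_mem_Ico₀ hT t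
  rw [hfy]
  exact hM ⟨(p, y), ⟨trivial, Set.Ico_subset_Icc_self hy⟩, rfl⟩

structure IsTransverseLinkFamily {P : Type*} [TopologicalSpace P] {m : ℕ}
    (K K' : P → Fin m → ℝ → Fin 3 → ℝ) : Prop where
  continuous : Continuous fun p : P × Fin m × ℝ => K p.1 p.2.1 p.2.2
  continuous_deriv : Continuous fun p : P × Fin m × ℝ => K' p.1 p.2.1 p.2.2
  hasDerivAt : ∀ s j t, HasDerivAt (K s j) (K' s j t) t
  periodic : ∀ s j, Function.Periodic (K s j) 1
  embedding : ∀ s j t j' t', K s j t = K s j' t' → j = j' ∧ ∃ z : ℤ, t' = t + z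
  transverse : ∀ s j t, alph (K s j t) (K' s j t) ≠ 0

namespace IsTransverseLinkFamily

variable {P Q : Type*} [TopologicalSpace P] [TopologicalSpace Q] {m : ℕ}
  {K K' : P → Fin m → ℝ → Fin 3 → ℝ}

theorem exists_scale_mul_sq_le [CompactSpace P] (hK : IsTransverseLinkFamily K K') {δ : ℝ}
    (hδ : 0 < δ) :
    ∃ c₁, 0 < c₁ ∧ c₁ ≤ 1 ∧
      ∀ s j t, c₁ * (K s j t 0 ^ 2 + K s j t 1 ^ 2 + K s j t 2 ^ 2) ≤ δ ^ 2 := by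
  have hcont (i : Fin 3) : Continuous fun p : (P × Fin m) × ℝ => K p.1.1 p.1.2 p.2 i :=
    (continuous_apply i).comp <| hK.continuous.comp (Homeomorph.prodAssoc P (Fin m) ℝ).continuous
  obtain ⟨M, hM⟩ := exists_forall_le_of_periodic (P := P × Fin m)
    (f := fun p t => K p.1 p.2 t 0 ^ 2 + K p.1 p.2 t 1 ^ 2 + K p.1 p.2 t 2 ^ 2) one_pos
    ((((hcont 0).pow 2).add ((hcont 1).pow 2)).add ((hcont 2).pow 2))
    (fun p t => by simp only [hK.periodic p.1 p.2 t])
  have hM' : 0 < max M (δ ^ 2) := lt_max_of_lt_right (by positivity)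
  refine ⟨δ ^ 2 / max M (δ ^ 2), by positivity, div_le_one_of_le₀ (le_max_right _ _) hM'.le,
    fun s j t => ?_⟩
  calc δ ^ 2 / max M (δ ^ 2) * (K s j t 0 ^ 2 + K s j t 1 ^ 2 + K s j t 2 ^ 2)
      ≤ δ ^ 2 / max M (δ ^ 2) * max M (δ ^ 2) := by
        gcongr
        exact (hM (s, j) t).trans (le_max_left _ _)
    _ = δ ^ 2 := div_mul_cancel₀ _ hM'.ne'

theorem comp_contactScaling (hK : IsTransverseLinkFamily K K') {g : Q → P} (hg : Continuous g)
    {c : Q → ℝ} (hc : Continuous c) (hc₀ : ∀ q, 0 < c q) :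
    IsTransverseLinkFamily (fun q j t => contactScaling (c q) (K (g q) j t))
      (fun q j t => contactScaling (c q) (K' (g q) j t)) where
  continuous := continuous_contactScaling.comp <| (hc.comp continuous_fst).prodMk <|
    hK.continuous.comp <| (hg.comp continuous_fst).prodMk continuous_snd
  continuous_deriv := continuous_contactScaling.comp <| (hc.comp continuous_fst).prodMk <|
    hK.continuous_deriv.comp <| (hg.comp continuous_fst).prodMk continuous_snd
  hasDerivAt q j t := (hK.hasDerivAt (g q) j t).contactScaling
  periodic q j t := by simp only [hK.periodic (g q) j t]
  embedding q j t j' t' h := hK.embedding (g q) j t j' t' (contactScaling_injective (hc₀ q) h)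
  transverse q j t := by
    rw [alph_contactScaling (hc₀ q).le]
    exact mul_ne_zero (hc₀ q).ne' (hK.transverse (g q) j t)

end IsTransverseLinkFamily

section shrinkingHomotopy

variable {E : Type*} [NormedAddCommGroup E] [NormedSpace ℝ E] {m : ℕ}

def radialStretch (q : Metric.closedBall (0 : E) 1 × Set.Icc (0 : ℝ) 1) :
    Metric.closedBall (0 : E) 1 :=
  unitBallRetraction ((1 + (q.2 : ℝ)) • (q.1 : E))

theorem continuous_radialStretch : Continuous (radialStretch (E := E)) :=
  continuous_unitBallRetraction.comp (by fun_prop)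

@[simp]
theorem radialStretch_zero (s : Metric.closedBall (0 : E) 1) : radialStretch (s, 0) = s := by
  simp [radialStretch]

theorem radialStretch_of_norm_eq_one {s : Metric.closedBall (0 : E) 1} (hs : ‖(s : E)‖ = 1)
    (τ : Set.Icc (0 : ℝ) 1) : radialStretch (s, τ) = s :=
  Subtype.ext (coe_unitBallRetraction_smul_of_norm_eq_one hs (by linarith [τ.2.1]))

theorem norm_radialStretch_one {s : Metric.closedBall (0 : E) 1} (hs : 1 / 2 ≤ ‖(s : E)‖) :
    ‖(radialStretch (s, 1) : E)‖ = 1 :=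
  norm_unitBallRetraction_of_one_le_norm (by rw [norm_smul]; norm_num; linarith)

def shrinkingHomotopy (c₁ : ℝ) (K : Metric.closedBall (0 : E) 1 → Fin m → ℝ → Fin 3 → ℝ)
    (q : Metric.closedBall (0 : E) 1 × Set.Icc (0 : ℝ) 1) (j : Fin m) (t : ℝ) : Fin 3 → ℝ :=
  contactScaling (shrinkFactor c₁ (q.1 : E) q.2) (K (radialStretch q) j t)

variable {c₁ : ℝ} {K K' : Metric.closedBall (0 : E) 1 → Fin m → ℝ → Fin 3 → ℝ}

theorem isTransverseLinkFamily_shrinkingHomotopy (hK : IsTransverseLinkFamily K K')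
    (hc₁₀ : 0 < c₁) (hc₁₁ : c₁ ≤ 1) :
    IsTransverseLinkFamily (shrinkingHomotopy c₁ K) (shrinkingHomotopy c₁ K') :=
  hK.comp_contactScaling continuous_radialStretch
    ((continuous_shrinkFactor c₁).comp
      (f := fun q : Metric.closedBall (0 : E) 1 × Set.Icc (0 : ℝ) 1 => ((q.1 : E), (q.2 : ℝ)))
      (by fun_prop))
    fun q => hc₁₀.trans_le (le_shrinkFactor hc₁₁ q.2.2.2 (mem_closedBall_zero_iff.mp q.1.2))

theorem shrinkingHomotopy_zero (s : Metric.closedBall (0 : E) 1) (j : Fin m) (t : ℝ) :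
    shrinkingHomotopy c₁ K (s, 0) j t = K s j t := by
  simp [shrinkingHomotopy]

theorem shrinkingHomotopy_of_norm_eq_one {s : Metric.closedBall (0 : E) 1}
    (hs : ‖(s : E)‖ = 1) (τ : Set.Icc (0 : ℝ) 1) (j : Fin m) (t : ℝ) :
    shrinkingHomotopy c₁ K (s, τ) j t = K s j t := by
  simp [shrinkingHomotopy, radialStretch_of_norm_eq_one hs, shrinkFactor_of_norm_eq_one hs]

theorem inBall_shrinkingHomotopy_one {δ : ℝ} (hc₁₀ : 0 ≤ c₁) (hc₁₁ : c₁ ≤ 1)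
    (hK : ∀ s j t, c₁ * (K s j t 0 ^ 2 + K s j t 1 ^ 2 + K s j t 2 ^ 2) ≤ δ ^ 2)
    (hbd : ∀ s : Metric.closedBall (0 : E) 1, (s : E) ∈ Metric.sphere 0 1 →
      ∀ j t, inBall δ (K s j t))
    (s : Metric.closedBall (0 : E) 1) (j : Fin m) (t : ℝ) :
    inBall δ (shrinkingHomotopy c₁ K (s, 1) j t) := by
  have hs : ‖(s : E)‖ ≤ 1 := mem_closedBall_zero_iff.mp s.2
  have hc_le : shrinkFactor c₁ (s : E) 1 ≤ 1 := shrinkFactor_le_one hc₁₁ zero_le_one hs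
  simp only [shrinkingHomotopy, Set.Icc.coe_one]
  refine inBall_contactScaling (hc₁₀.trans (le_shrinkFactor hc₁₁ le_rfl hs)) hc_le ?_
  rcases le_total ‖(s : E)‖ (1 / 2) with hs_inner | hs_outer
  · rw [shrinkFactor_one_right_of_norm_le_half hs_inner]
    exact hK _ j t
  · exact (mul_le_of_le_one_left (by positivity) hc_le).trans
      (hbd _ (mem_sphere_zero_iff_norm.mpr (norm_radialStretch_one hs_outer)) j t)

end shrinkingHomotopy

theorem shrinking_families_of_transverse_links
    (δ : ℝ) (hδ : 0 < δ) (d m : ℕ)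
    (K K' : Bd d → Fin m → ℝ → (Fin 3 → ℝ))
    (hK : Continuous fun p : Bd d × Fin m × ℝ => K p.1 p.2.1 p.2.2)
    (hK' : Continuous fun p : Bd d × Fin m × ℝ => K' p.1 p.2.1 p.2.2)
    (hder : ∀ s j t, HasDerivAt (fun τ => K s j τ) (K' s j t) t)
    (hper : ∀ s j t, K s j (t + 1) = K s j t)
    (hemb : ∀ s j t j' t', K s j t = K s j' t' → j = j' ∧ ∃ z : ℤ, t' = t + z)
    (htr : ∀ s j t, alph (K s j t) (K' s j t) ≠ 0)
    (hbd : ∀ s : Bd d, (s : EuclideanSpace ℝ (Fin d)) ∈ Metric.sphere 0 1 →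
      ∀ j t, inBall δ (K s j t)) :
    ∃ Kh K'h : Bd d → Set.Icc (0:ℝ) 1 → Fin m → ℝ → (Fin 3 → ℝ),
      Continuous (fun p : (Bd d × Set.Icc (0:ℝ) 1) × Fin m × ℝ =>
        Kh p.1.1 p.1.2 p.2.1 p.2.2) ∧
      Continuous (fun p : (Bd d × Set.Icc (0:ℝ) 1) × Fin m × ℝ =>
        K'h p.1.1 p.1.2 p.2.1 p.2.2) ∧
      (∀ s τ j t, HasDerivAt (fun u => Kh s τ j u) (K'h s τ j t) t) ∧
      (∀ s τ j t, Kh s τ j (t + 1) = Kh s τ j t) ∧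
      (∀ s τ j t j' t', Kh s τ j t = Kh s τ j' t' → j = j' ∧ ∃ z : ℤ, t' = t + z) ∧
      (∀ s τ j t, alph (Kh s τ j t) (K'h s τ j t) ≠ 0) ∧
      -- K(s, 0) = K(s):
      (∀ s j t, Kh s ⟨0, by norm_num⟩ j t = K s j t) ∧
      -- K(s, t) = K(s) for s ∈ ∂B^d(1):
      (∀ s : Bd d, (s : EuclideanSpace ℝ (Fin d)) ∈ Metric.sphere 0 1 →
        ∀ τ j t, Kh s τ j t = K s j t) ∧
      -- K(s, 1) ⊂ B(δ):
      (∀ s j t, inBall δ (Kh s ⟨1, by norm_num⟩ j t)) := by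
  have hfam : IsTransverseLinkFamily K K' := ⟨hK, hK', hder, hper, hemb, htr⟩
  obtain ⟨c₁, hc₁₀, hc₁₁, hc₁⟩ := hfam.exists_scale_mul_sq_le hδ
  have hh := isTransverseLinkFamily_shrinkingHomotopy hfam hc₁₀ hc₁₁
  refine ⟨fun s τ => shrinkingHomotopy c₁ K (s, τ), fun s τ => shrinkingHomotopy c₁ K' (s, τ),
    hh.continuous, hh.continuous_deriv, fun s τ => hh.hasDerivAt (s, τ),
    fun s τ => hh.periodic (s, τ), fun s τ => hh.embedding (s, τ),
    fun s τ => hh.transverse (s, τ), shrinkingHomotopy_zero,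
    fun s hs => shrinkingHomotopy_of_norm_eq_one (mem_sphere_zero_iff_norm.mp hs),
    inBall_shrinkingHomotopy_one hc₁₀.le hc₁₁ hc₁ hbd⟩
end
end

section
/- Let (A, ∂̂̂) be the DGA over Z[λ^{±1}, μ^{±1}] freely generated by c (degree 1) and e (degree 2) with ∂̂̂c = λ + μ and ∂̂̂e = 0 (the (U,V) = (0,0) specialization of the transverse DGA of the trivial 1-braid). Then the degree-0 homology of (A, ∂̂̂) is isomorphic to Z[λ^{±1}, μ^{±1}]/(λ + μ), which is a nonzero ring; in particular the homology of (A, ∂̂̂) is nontrivial, so (A, ∂̂̂) is not stable tame isomorphic to the (U,V) = (0,0) specialization of the transverse DGA of σ₁^{-1} ∈ B₂ (whose homology vanishes). Hence the filtered transverse DGAs of the trivial 1-braid and of σ₁^{-1} are not filtered stable tame isomorphic, distinguishing the transverse unknots of self-linking numbers −1 and −3. -/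
noncomputable section
open scoped BigOperators Classical

/- ## coefficient ring Z[λ_1^{±1},μ_1^{±1},…,λ_r^{±1},μ_r^{±1},U,V] -/
abbrev Rr (r : ℕ) : Type := AddMonoidAlgebra ℤ ((Fin r → ℤ) × (Fin r → ℤ) × ℕ × ℕ)
def lamC {r : ℕ} (m : Fin r) (z : ℤ) : Rr r := AddMonoidAlgebra.single (Pi.single m z, 0, 0, 0) 1
def muC {r : ℕ} (m : Fin r) (z : ℤ) : Rr r := AddMonoidAlgebra.single (0, Pi.single m z, 0, 0) 1
def Uc {r : ℕ} : Rr r := AddMonoidAlgebra.single (0, 0, 1, 0) 1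
def Vc {r : ℕ} : Rr r := AddMonoidAlgebra.single (0, 0, 0, 1) 1
def lmwC {r : ℕ} (m : Fin r) (wz : ℤ) : Rr r := AddMonoidAlgebra.single (Pi.single m 1, Pi.single m wz, 0, 0) 1
def lmwInvC {r : ℕ} (m : Fin r) (wz : ℤ) : Rr r := AddMonoidAlgebra.single (Pi.single m (-1), Pi.single m (-wz), 0, 0) 1

/- ## generators -/
abbrev OffD' (n : ℕ) := {p : Fin n × Fin n // p.1 ≠ p.2}
inductive GenIdx (n : ℕ) : Type
  | a (p : OffD' n)
  | b (p : OffD' n)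
  | c (i j : Fin n)
  | e (i j : Fin n)

def gdeg {n : ℕ} : GenIdx n → ℕ
  | .a _ => 0
  | .b _ => 1
  | .c _ _ => 1
  | .e _ _ => 2

abbrev FA (n r : ℕ) := FreeAlgebra (Rr r) (GenIdx n)

def cm {n r : ℕ} (x : Rr r) : FA n r := algebraMap _ _ x
def Xa {n r : ℕ} (i j : Fin n) : FA n r := if h : i = j then 0 else FreeAlgebra.ι _ (GenIdx.a ⟨(i,j), h⟩)
def Xb {n r : ℕ} (i j : Fin n) : FA n r := if h : i = j then 0 else FreeAlgebra.ι _ (GenIdx.b ⟨(i,j), h⟩)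
def Xc {n r : ℕ} (i j : Fin n) : FA n r := FreeAlgebra.ι _ (GenIdx.c i j)
def Xe {n r : ℕ} (i j : Fin n) : FA n r := FreeAlgebra.ι _ (GenIdx.e i j)

/- ## braid words, permutations, writhe -/
abbrev SIdx (n : ℕ) := {k : Fin n // (k : ℕ) + 1 < n}
abbrev Brd (n : ℕ) := List (SIdx n × Bool)
def sSucc {n : ℕ} (k : SIdx n) : Fin n := ⟨(k.1 : ℕ) + 1, k.2⟩
def permOf {n : ℕ} : Brd n → Equiv.Perm (Fin n)
  | [] => 1
  | (k, _) :: t => Equiv.swap k.1 (sSucc k) * permOf t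
def wriAux {n r : ℕ} (α : Fin n → Fin r) (m : Fin r) : Brd n → Equiv.Perm (Fin n) → ℤ
  | [], _ => 0
  | (k, ε) :: t, ρ =>
      (if α (ρ k.1) = m ∧ α (ρ (sSucc k)) = m then (if ε then 1 else -1) else 0) +
        wriAux α m t (Equiv.swap k.1 (sSucc k) * ρ)
def wri {n r : ℕ} (α : Fin n → Fin r) (m : Fin r) (w : Brd n) : ℤ := wriAux α m w 1

/- ## the matrices -/
def Amat {n r : ℕ} (α : Fin n → Fin r) : Matrix (Fin n) (Fin n) (FA n r) := fun i j =>
  if i = j then cm (1 + muC (α i) 1)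
  else if i < j then Xa i j
  else cm (muC (α j) 1) * Xa i j
def AUmat {n r : ℕ} (α : Fin n → Fin r) : Matrix (Fin n) (Fin n) (FA n r) := fun i j =>
  if i = j then cm (Uc + muC (α i) 1)
  else if i < j then cm Uc * Xa i j
  else cm (muC (α j) 1) * Xa i j
def AVmat {n r : ℕ} (α : Fin n → Fin r) : Matrix (Fin n) (Fin n) (FA n r) := fun i j =>
  if i = j then cm (1 + muC (α i) 1 * Vc)
  else if i < j then Xa i j
  else cm (muC (α j) 1 * Vc) * Xa i j
def Bmat {n r : ℕ} (α : Fin n → Fin r) : Matrix (Fin n) (Fin n) (FA n r) := fun i j =>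
  if i = j then 0
  else if i < j then Xb i j
  else cm (muC (α j) 1) * Xb i j
def BUmat {n r : ℕ} (α : Fin n → Fin r) : Matrix (Fin n) (Fin n) (FA n r) := fun i j =>
  if i = j then 0
  else if i < j then cm Uc * Xb i j
  else cm (muC (α j) 1) * Xb i j
def BVmat {n r : ℕ} (α : Fin n → Fin r) : Matrix (Fin n) (Fin n) (FA n r) := fun i j =>
  if i = j then 0
  else if i < j then Xb i j
  else cm (muC (α j) 1 * Vc) * Xb i j
def Cmat {n r : ℕ} : Matrix (Fin n) (Fin n) (FA n r) := fun i j => Xc i j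
def Emat {n r : ℕ} : Matrix (Fin n) (Fin n) (FA n r) := fun i j => Xe i j

/-- strand i is "leading": the first strand of its component. -/
def leading {n r : ℕ} (α : Fin n → Fin r) (i : Fin n) : Prop := ∀ j : Fin n, α j = α i → i ≤ j

def lamMat {n r : ℕ} (w : Brd n) (α : Fin n → Fin r) : Matrix (Fin n) (Fin n) (FA n r) :=
  Matrix.diagonal fun i => if leading α i then cm (lmwC (α i) (wri α (α i) w)) else 1
def lamInvMat {n r : ℕ} (w : Brd n) (α : Fin n → Fin r) : Matrix (Fin n) (Fin n) (FA n r) :=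
  Matrix.diagonal fun i => if leading α i then cm (lmwInvC (α i) (wri α (α i) w)) else 1

/- ## grading and Leibniz rule on free algebras -/
def homog (R : Type) [CommRing R] {ι : Type} (dg : ι → ℕ) (d : ℕ) : Submodule R (FreeAlgebra R ι) :=
  Submodule.span R {x | ∃ l : List ι, (l.map dg).sum = d ∧ x = (l.map (FreeAlgebra.ι R)).prod}

def IsLeibniz {R : Type} [CommRing R] {ι : Type} (dg : ι → ℕ)
    (D : FreeAlgebra R ι →ₗ[R] FreeAlgebra R ι) : Prop :=
  ∀ (d : ℕ) (x y : FreeAlgebra R ι), x ∈ homog R dg d →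
    D (x * y) = D x * y + ((-1 : ℤ) ^ d) • (x * D y)
/- ## FDGA and stable tame isomorphism -/
structure FDGA (R : Type) [CommRing R] where
  ι : Type
  dg : ι → ℕ
  D : FreeAlgebra R ι →ₗ[R] FreeAlgebra R ι

/-- algebra morphism induced by a map of generators. -/
def relabelHom (R : Type) [CommRing R] {ι ι' : Type} (e : ι → ι') :
    FreeAlgebra R ι →ₐ[R] FreeAlgebra R ι' :=
  FreeAlgebra.lift R fun i => FreeAlgebra.ι R (e i)

/-- elementary automorphism: sends one generator g to u•g + v with u a unit and v in
the subalgebra generated by the remaining generators, fixing the other generators. -/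
def IsElementaryAut (R : Type) [CommRing R] {ι : Type}
    (ψ : FreeAlgebra R ι ≃ₐ[R] FreeAlgebra R ι) : Prop :=
  ∃ (g : ι) (u : Rˣ) (v : FreeAlgebra R ι),
    v ∈ Algebra.adjoin R ((fun h : ι => FreeAlgebra.ι R h) '' {h | h ≠ g}) ∧
    ψ (FreeAlgebra.ι R g) = (u : R) • FreeAlgebra.ι R g + v ∧
    ∀ h : ι, h ≠ g → ψ (FreeAlgebra.ι R h) = FreeAlgebra.ι R h

/-- relabeling isomorphism induced by a degree-preserving bijection of generators. -/
def IsRelabel {R : Type} [CommRing R] (G G' : FDGA R)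
    (Θ : FreeAlgebra R G.ι ≃ₐ[R] FreeAlgebra R G'.ι) : Prop :=
  ∃ e : G.ι ≃ G'.ι, (∀ i, G'.dg (e i) = G.dg i) ∧
    ∀ i, Θ (FreeAlgebra.ι R i) = FreeAlgebra.ι R (e i)

/-- a tame isomorphism: a composition of elementary automorphisms followed by a
generator-relabeling isomorphism. -/
def IsTameIso {R : Type} [CommRing R] (G G' : FDGA R)
    (Θ : FreeAlgebra R G.ι ≃ₐ[R] FreeAlgebra R G'.ι) : Prop :=
  ∃ (L : List (FreeAlgebra R G.ι ≃ₐ[R] FreeAlgebra R G.ι))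
    (Θ₀ : FreeAlgebra R G.ι ≃ₐ[R] FreeAlgebra R G'.ι),
    (∀ ψ ∈ L, IsElementaryAut R ψ) ∧ IsRelabel G G' Θ₀ ∧ Θ = L.prod.trans Θ₀

/-- a tame isomorphism of DGAs: a tame isomorphism commuting with the differentials. -/
def IsTameDGAIso {R : Type} [CommRing R] (G G' : FDGA R) : Prop :=
  ∃ Θ : FreeAlgebra R G.ι ≃ₐ[R] FreeAlgebra R G'.ι,
    IsTameIso G G' Θ ∧ ∀ x, Θ (G.D x) = G'.D (Θ x)

/-- `G'` is a stabilization of `G`: it has two extra free generators α (degree d+1) and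
β (degree d), with ∂α = β, ∂β = 0, the differential extending that of `G` by the
graded Leibniz rule. -/
def IsStabOf {R : Type} [CommRing R] (G' G : FDGA R) : Prop :=
  ∃ (d : ℕ) (e : G'.ι ≃ (G.ι ⊕ Bool)),
    (∀ i : G.ι, G'.dg (e.symm (Sum.inl i)) = G.dg i) ∧
    G'.dg (e.symm (Sum.inr true)) = d + 1 ∧
    G'.dg (e.symm (Sum.inr false)) = d ∧
    IsLeibniz G'.dg G'.D ∧
    (∀ i : G.ι,
      G'.D (FreeAlgebra.ι R (e.symm (Sum.inl i))) =
        relabelHom R (fun i : G.ι => e.symm (Sum.inl i)) (G.D (FreeAlgebra.ι R i))) ∧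
    G'.D (FreeAlgebra.ι R (e.symm (Sum.inr true))) = FreeAlgebra.ι R (e.symm (Sum.inr false)) ∧
    G'.D (FreeAlgebra.ι R (e.symm (Sum.inr false))) = 0

/-- two free DGAs are (filtered) stable tame isomorphic if after finitely many
stabilizations they become tamely isomorphic (over the fixed coefficient ring, so in
particular all filtrations by scalar coefficients are respected). -/
def IsStableTame {R : Type} [CommRing R] (G G' : FDGA R) : Prop :=
  ∃ G₁ G₂ : FDGA R,
    Relation.ReflTransGen (fun X Y : FDGA R => IsStabOf Y X) G G₁ ∧
    Relation.ReflTransGen (fun X Y : FDGA R => IsStabOf Y X) G' G₂ ∧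
    IsTameDGAIso G₁ G₂

def phiW {N : ℕ} (φs : SIdx N → RingAut (Atil N)) : Brd N → RingAut (Atil N)
  | [] => 1
  | (k, ε) :: t => (if ε then φs k else (φs k)⁻¹) * phiW φs t

def embS {n : ℕ} (k : SIdx n) : SIdx (n + 1) :=
  ⟨k.1.succ, by have := k.2; simp [Fin.val_succ]; omega⟩

def embW {n : ℕ} (w : Brd n) : Brd (n + 1) := w.map fun p => (embS p.1, p.2)

def sub0 (n : ℕ) : Subring (Atil (n + 1)) :=
  Subring.closure ({x | ∃ (i : Fin n) (z : ℤ), x = mtA i.succ z} ∪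
    {x | ∃ i j : Fin n, x = aG i.succ j.succ})

/-- All the data entering the combinatorial transverse DGA `(A_n(B), ∂⁻)` of a braid
word `B = w` on `n` strands whose closure is an `r`-component link, together with the
defining properties of each piece:

* `α` assigns to each strand its link component (two strands belong to the same
  component iff they are in the same cycle of the braid permutation);
* `φs` are the automorphisms `φ_{σ_k}` of `Ã⁰_{n+1}` (strands `0,1,…,n`);
* `P`, `Q` are the matrices `Φ^L_B`, `Φ^R_B`, with entries in the subalgebra `Ã⁰ₙ`,
  defined by the expansions of `φ′_B(a_{i0})` and `φ′_B(a_{0j})`;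
* `θ` is the substitution `μ̃ᵢ ↦ μ_{α(i)}`, `a_{ij} ↦ a_{ij}` from `Ã⁰_{n+1}` to
  `A_n(B)`, so `P.map θ` and `Q.map θ` are `Φ^L_B`, `Φ^R_B` over `A_n(B)`;
* `Qi` is the two-sided inverse `(Φ^R_B)^{-1}` over `A_n(B)`;
* `D` is the degree `−1` map `∂⁻` determined on the generators by the matrix equations
  `∂⁻𝐀 = 0`, `∂⁻𝐁 = −𝛌⁻¹𝐀𝛌 + Φ^L𝐀Φ^R`, `∂⁻𝐂 = 𝐀^V𝛌 + 𝐀^UΦ^R`,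
  `∂⁻𝐄 = 𝐁^V(Φ^R)⁻¹ + 𝐁^U𝛌⁻¹ − Φ^L𝐂𝛌⁻¹ + 𝛌⁻¹𝐂(Φ^R)⁻¹`, and extended to all of
  `A_n(B)` by the graded Leibniz rule. -/
structure TransData (n r : ℕ) (w : Brd n) where
  α : Fin n → Fin r
  hαsur : Function.Surjective α
  hα : ∀ i j : Fin n, α i = α j ↔ (permOf w).SameCycle i j
  φs : SIdx (n + 1) → RingAut (Atil (n + 1))
  hφs : ∀ k : SIdx (n + 1), IsPhiSigma (n + 1) k.1 k.2 (φs k : Atil (n+1) →+* Atil (n+1))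
  P : Matrix (Fin n) (Fin n) (Atil (n + 1))
  Q : Matrix (Fin n) (Fin n) (Atil (n + 1))
  hPQmem : ∀ i j : Fin n, P i j ∈ sub0 n ∧ Q i j ∈ sub0 n
  hP : ∀ i : Fin n, phiW φs (embW w) (aG i.succ 0) = ∑ j : Fin n, P i j * aG j.succ 0
  hQ : ∀ j : Fin n, phiW φs (embW w) (aG 0 j.succ) = ∑ i : Fin n, aG 0 i.succ * Q i j
  θ : Atil (n + 1) →+* FA n r
  hθμ : ∀ (i : Fin n) (z : ℤ), θ (mtA i.succ z) = cm (muC (α i) z)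
  hθa : ∀ i j : Fin n, θ (aG i.succ j.succ) = Xa i j
  Qi : Matrix (Fin n) (Fin n) (FA n r)
  hQi : Q.map θ * Qi = 1 ∧ Qi * Q.map θ = 1
  D : FA n r →ₗ[Rr r] FA n r
  hLeib : IsLeibniz gdeg D
  hDA : ∀ i j : Fin n, D (Amat α i j) = 0
  hDB : ∀ i j : Fin n,
    D (Bmat α i j) = (- (lamInvMat w α * Amat α * lamMat w α) + P.map θ * Amat α * Q.map θ) i j
  hDC : ∀ i j : Fin n,
    D (Cmat i j) = (AVmat α * lamMat w α + AUmat α * Q.map θ) i j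
  hDE : ∀ i j : Fin n,
    D (Emat i j) = ((BVmat α * Qi + BUmat α * lamInvMat w α
      - P.map θ * Cmat * lamInvMat w α + lamInvMat w α * Cmat * Qi :
        Matrix (Fin n) (Fin n) (FA n r)) i j)

/-- The transverse DGA of a braid word, as a free DGA over `Rr r`. -/
def TransData.toF {n r : ℕ} {w : Brd n} (data : TransData n r w) : FDGA (Rr r) :=
  ⟨GenIdx n, gdeg, data.D⟩

/- ## the (U,V) = (0,0) specializations: trivial 1-braid versus σ₁⁻¹ ∈ B₂ -/

/-- The coefficient ring `ℤ[λ^{±1}, μ^{±1}]`. -/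
abbrev RL : Type := AddMonoidAlgebra ℤ (ℤ × ℤ)

/-- The monomial `λ^a μ^b` in `ℤ[λ^{±1}, μ^{±1}]`. -/
def lm (a b : ℤ) : RL := AddMonoidAlgebra.single (a, b) 1

/-- Generators `c` (degree 1) and `e` (degree 2). -/
inductive CE : Type
  | c
  | e

def cedeg : CE → ℕ
  | .c => 1
  | .e => 2

/-- The braid word `σ₁⁻¹ ∈ B₂` (0-based index 0). -/
def wSigma1Inv : Brd 2 := [(⟨(0 : Fin 2), by omega⟩, false)]

/-- The braid word `σ₁ ∈ B₂`; the trivial 1-braid has no letters. -/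
def wTriv : Brd 1 := []

/-- Degree-zero cycles of a free DGA. -/
def Z0 {ι : Type} (dg : ι → ℕ) (D : FreeAlgebra RL ι →ₗ[RL] FreeAlgebra RL ι) :
    Submodule RL (FreeAlgebra RL ι) :=
  homog RL dg 0 ⊓ LinearMap.ker D

/-- Degree-zero boundaries, inside the degree-zero cycles. -/
def B0 {ι : Type} (dg : ι → ℕ) (D : FreeAlgebra RL ι →ₗ[RL] FreeAlgebra RL ι) :
    Submodule RL (Z0 dg D) :=
  Submodule.comap (Z0 dg D).subtype (LinearMap.range D)

/-- The degree-zero homology of a free DGA over `RL`. -/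
abbrev H0 {ι : Type} (dg : ι → ℕ) (D : FreeAlgebra RL ι →ₗ[RL] FreeAlgebra RL ι) :=
  @HasQuotient.Quotient (Z0 dg D) _ Submodule.hasQuotient (B0 dg D)


/-! An augmentation, i.e. an algebra map to a coefficient algebra `S` killing `∂` on the
generators, kills all boundaries by the Leibniz rule, extends by `0` over a stabilization and
transports along tame isomorphisms; so having one is a stable tame invariant.
The unknot DGA has the augmentation `c, e ↦ 0` into `S = ℤ[λ^{±1}, μ^{±1}]/(λ + μ)`, which is
nonzero because `λ ↦ 1, μ ↦ -1` kills `λ + μ`.  For `σ₁⁻¹` the braid action gives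
`(Φ^R)₀₀ = 0`, hence `∂c₀₀ = (1 + μV) λμ⁻¹ + U a₀₁ (Φ^R)₁₀`, which is the unit `λμ⁻¹` modulo
`(U, V)`: no augmentation into a nonzero ring can kill it.
The same augmentation computes `H₀` of the unknot DGA: the degree-zero chains are the scalars,
all cycles, and a scalar is a boundary exactly when it lies in `(λ + μ)`. -/

namespace IsLeibniz

variable {R : Type} [CommRing R] {ι : Type} {dg : ι → ℕ}
  {D : FreeAlgebra R ι →ₗ[R] FreeAlgebra R ι}

lemma map_one (hD : IsLeibniz dg D) : D 1 = 0 := by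
  have h := hD 0 1 1 (Submodule.subset_span ⟨[], rfl, rfl⟩)
  simp only [mul_one, one_mul, pow_zero, one_smul] at h
  exact left_eq_add.mp h

/-- Induction on the left factor: `D (ι g * y) = D (ι g) * y ± ι g * D y`. -/
lemma map_apply_eq_zero {S : Type} [Ring S] [Algebra R S] (hD : IsLeibniz dg D)
    (ε : FreeAlgebra R ι →ₐ[R] S) (hε : ∀ i, ε (D (FreeAlgebra.ι R i)) = 0)
    (x : FreeAlgebra R ι) : ε (D x) = 0 := by
  suffices h : ∀ y, ε (D y) = 0 → ε (D (x * y)) = 0 by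
    simpa using h 1 (by rw [hD.map_one, map_zero])
  induction x using FreeAlgebra.induction with
  | grade0 r =>
    intro y hy
    rw [← Algebra.smul_def, map_smul, map_smul, hy, smul_zero]
  | grade1 g =>
    intro y hy
    rw [hD (dg g) _ y (Submodule.subset_span ⟨[g], by simp, by simp⟩), map_add, map_mul,
      hε g, zero_mul, map_zsmul, map_mul, hy, mul_zero, smul_zero, add_zero]
  | mul a b ha hb =>
    intro y hy
    rw [mul_assoc]
    exact ha _ (hb y hy)
  | add a b ha hb =>
    intro y hy
    rw [add_mul, map_add, map_add, ha y hy, hb y hy, add_zero]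

end IsLeibniz

section Augmentation

variable {R : Type} [CommRing R] (S : Type) [CommRing S] [Algebra R S]

def HasAugmentation (G : FDGA R) : Prop :=
  ∃ ε : FreeAlgebra R G.ι →ₐ[R] S, ∀ i, ε (G.D (FreeAlgebra.ι R i)) = 0

variable {S}

lemma IsStabOf.isLeibniz {G G' : FDGA R} (h : IsStabOf G' G) : IsLeibniz G'.dg G'.D := by
  obtain ⟨-, -, -, -, -, hD, -⟩ := h
  exact hD

/-- Extend by `0` on the two new generators; conversely restrict along the inclusion. -/
lemma IsStabOf.hasAugmentation_iff {G G' : FDGA R} (h : IsStabOf G' G) :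
    HasAugmentation S G ↔ HasAugmentation S G' := by
  obtain ⟨_, e, -, -, -, -, hDi, hDt, hDf⟩ := h
  have hDi' : ∀ j i, e j = Sum.inl i → G'.D (FreeAlgebra.ι R j) =
      relabelHom R (fun i : G.ι => e.symm (Sum.inl i)) (G.D (FreeAlgebra.ι R i)) := by
    intro j i hj
    rw [← hDi, ← hj, e.symm_apply_apply]
  constructor
  · rintro ⟨ε, hε⟩
    let ε' : FreeAlgebra R G'.ι →ₐ[R] S :=
      FreeAlgebra.lift R fun j => Sum.elim (fun i => ε (FreeAlgebra.ι R i)) 0 (e j)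
    have hres : ε'.comp (relabelHom R fun i : G.ι => e.symm (Sum.inl i)) = ε := by
      ext i
      simp [ε', relabelHom]
    refine ⟨ε', fun j => ?_⟩
    rcases hj : e j with i | (_ | _)
    · rw [hDi' j i hj, ← AlgHom.comp_apply, hres, hε]
    · rw [← e.symm_apply_apply j, hj, hDf, map_zero]
    · rw [← e.symm_apply_apply j, hj, hDt]
      simp [ε']
  · rintro ⟨ε', hε'⟩
    refine ⟨ε'.comp (relabelHom R fun i : G.ι => e.symm (Sum.inl i)), fun i => ?_⟩
    rw [AlgHom.comp_apply, ← hDi i]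
    exact hε' _

lemma hasAugmentation_iff_of_reflTransGen {G G' : FDGA R}
    (h : Relation.ReflTransGen (fun X Y : FDGA R => IsStabOf Y X) G G') :
    HasAugmentation S G ↔ HasAugmentation S G' := by
  induction h with
  | refl => rfl
  | tail _ hstab ih => exact ih.trans hstab.hasAugmentation_iff

lemma isLeibniz_of_reflTransGen {G G' : FDGA R}
    (h : Relation.ReflTransGen (fun X Y : FDGA R => IsStabOf Y X) G G')
    (hG : IsLeibniz G.dg G.D) : IsLeibniz G'.dg G'.D := by
  induction h with
  | refl => exact hG
  | tail _ hstab _ => exact hstab.isLeibniz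

lemma IsTameDGAIso.hasAugmentation {G G' : FDGA R} (h : IsTameDGAIso G G')
    (hG : IsLeibniz G.dg G.D) (hA : HasAugmentation S G) : HasAugmentation S G' := by
  obtain ⟨Θ, -, hΘ⟩ := h
  obtain ⟨ε, hε⟩ := hA
  refine ⟨ε.comp Θ.symm.toAlgHom, fun j => ?_⟩
  have hD : Θ.symm (G'.D (FreeAlgebra.ι R j)) = G.D (Θ.symm (FreeAlgebra.ι R j)) :=
    Θ.injective (by rw [hΘ, Θ.apply_symm_apply, Θ.apply_symm_apply])
  rw [AlgHom.comp_apply, AlgEquiv.coe_toAlgHom, hD]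
  exact hG.map_apply_eq_zero ε hε _

lemma not_isStableTame_of_hasAugmentation {G G' : FDGA R} (hG : IsLeibniz G.dg G.D)
    (hA : HasAugmentation S G) (hA' : ¬ HasAugmentation S G') : ¬ IsStableTame G G' := by
  rintro ⟨G₁, G₂, h₁, h₂, hiso⟩
  exact hA' ((hasAugmentation_iff_of_reflTransGen h₂).2
    (hiso.hasAugmentation (isLeibniz_of_reflTransGen h₁ hG)
      ((hasAugmentation_iff_of_reflTransGen h₁).1 hA)))

end Augmentation

lemma homog_zero_eq_one {R : Type} [CommRing R] {X : Type} {dg : X → ℕ}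
    (hdg : ∀ i, dg i ≠ 0) : homog R dg 0 = 1 := by
  have hwords : {x : FreeAlgebra R X | ∃ l : List X, (l.map dg).sum = 0 ∧
      x = (l.map (FreeAlgebra.ι R)).prod} = {1} := by
    ext x
    constructor
    · rintro ⟨_ | ⟨i, l⟩, hl, rfl⟩
      · rfl
      · exact absurd (Nat.eq_zero_of_add_eq_zero_right (by simpa using hl)) (hdg i)
    · rintro rfl
      exact ⟨[], rfl, rfl⟩
  rw [homog, hwords, Submodule.one_eq_span]

/-- Degree-zero chains are the scalars, all of them cycles. -/
def H0.equivQuotient {X : Type} {dg : X → ℕ} {D : FreeAlgebra RL X →ₗ[RL] FreeAlgebra RL X}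
    (hdg : ∀ i, dg i ≠ 0) (hD : IsLeibniz dg D) :
    H0 dg D ≃ₗ[RL] RL ⧸ (LinearMap.range D).comap (Algebra.linearMap RL _) := by
  have hZ : Z0 dg D = LinearMap.range (Algebra.linearMap RL (FreeAlgebra RL X)) := by
    rw [Z0, homog_zero_eq_one hdg, Submodule.one_eq_range, inf_eq_left]
    rintro _ ⟨s, rfl⟩
    rw [LinearMap.mem_ker, Algebra.linearMap_apply, Algebra.algebraMap_eq_smul_one, map_smul,
      hD.map_one, smul_zero]
  let e : RL ≃ₗ[RL] Z0 dg D :=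
    (LinearEquiv.ofInjective _ FreeAlgebra.algebraMap_leftInverse.injective).trans
      (LinearEquiv.ofEq _ _ hZ.symm)
  refine (Submodule.Quotient.equiv _ _ e ?_).symm
  rw [← Submodule.map_comap_eq_of_surjective e.surjective (B0 dg D), B0, ← Submodule.comap_comp]
  rfl

section CE

variable {R : Type} [CommRing R] {D : FreeAlgebra R CE →ₗ[R] FreeAlgebra R CE} {r : R}

lemma hasAugmentation_CE (S : Type) [CommRing S] [Algebra R S] (hr : algebraMap R S r = 0)
    (hc : D (FreeAlgebra.ι _ CE.c) = algebraMap R _ r) (he : D (FreeAlgebra.ι _ CE.e) = 0) :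
    HasAugmentation S (⟨CE, cedeg, D⟩ : FDGA R) := by
  refine ⟨FreeAlgebra.lift R 0, ?_⟩
  rintro (_ | _)
  · rw [show (⟨CE, cedeg, D⟩ : FDGA R).D = D from rfl, hc, AlgHom.commutes, hr]
  · rw [show (⟨CE, cedeg, D⟩ : FDGA R).D = D from rfl, he, map_zero]

lemma comap_range_eq_span_of_CE (hD : IsLeibniz cedeg D)
    (hc : D (FreeAlgebra.ι _ CE.c) = algebraMap R _ r) (he : D (FreeAlgebra.ι _ CE.e) = 0) :
    (LinearMap.range D).comap (Algebra.linearMap R _) = Ideal.span {r} := by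
  refine le_antisymm ?_ ((Ideal.span_singleton_le_iff_mem _).2 ⟨_, hc⟩)
  rintro s ⟨x, hx⟩
  obtain ⟨ε, hε⟩ := hasAugmentation_CE (R ⧸ Ideal.span {r})
    (Ideal.Quotient.eq_zero_iff_mem.2 (Ideal.mem_span_singleton_self r)) hc he
  have := hD.map_apply_eq_zero ε hε x
  rwa [hx, Algebra.linearMap_apply, AlgHom.commutes, Ideal.Quotient.algebraMap_eq,
    Ideal.Quotient.eq_zero_iff_mem] at this

end CE

lemma Ideal.Quotient.nontrivial_of_le_ker {R S : Type} [CommRing R] [Ring S] [Nontrivial S]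
    {I : Ideal R} (f : R →+* S) (h : I ≤ RingHom.ker f) : Nontrivial (R ⧸ I) :=
  (Ideal.Quotient.lift I f h).domain_nontrivial

/-- `λ ↦ 1`, `μ ↦ -1`. -/
def signRL : RL →ₐ[ℤ] ℤ :=
  AddMonoidAlgebra.lift ℤ ℤ (ℤ × ℤ)
    { toFun := fun g => (((-1 : ℤˣ) ^ g.toAdd.2 : ℤˣ) : ℤ)
      map_one' := by simp
      map_mul' := fun g h => by simp [zpow_add] }

instance : Nontrivial (RL ⧸ Ideal.span {lm 1 0 + lm 0 1}) :=
  Ideal.Quotient.nontrivial_of_le_ker signRL.toRingHom <| by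
    simp [Ideal.span_le, signRL, lm, AddMonoidAlgebra.lift_single]

def idealUVLamMu : Ideal (Rr 1) := Ideal.span {Uc, Vc, lamC 0 1 + muC 0 1}

lemma Uc_mem_idealUVLamMu : Uc ∈ idealUVLamMu := Ideal.subset_span (by simp)

lemma Vc_mem_idealUVLamMu : Vc ∈ idealUVLamMu := Ideal.subset_span (by simp)

lemma unknot_constant_mem_idealUVLamMu :
    Uc + lamC 0 1 + lamC 0 1 * muC 0 1 * Vc + muC 0 1 ∈ idealUVLamMu := by
  rw [show Uc + lamC 0 1 + lamC 0 1 * muC 0 1 * Vc + muC 0 1 =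
    Uc + lamC 0 1 * muC 0 1 * Vc + (lamC 0 1 + muC 0 1) by ring]
  exact add_mem (add_mem Uc_mem_idealUVLamMu (Ideal.mul_mem_left _ _ Vc_mem_idealUVLamMu))
    (Ideal.subset_span (by simp))

/-- `λ ↦ 1`, `μ ↦ -1`, `U ↦ 0`, `V ↦ 0`. -/
def signRr : Rr 1 →ₐ[ℤ] ℤ :=
  AddMonoidAlgebra.lift ℤ ℤ _
    { toFun := fun g =>
        (((-1 : ℤˣ) ^ g.toAdd.2.1 0 : ℤˣ) : ℤ) * 0 ^ g.toAdd.2.2.1 * 0 ^ g.toAdd.2.2.2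
      map_one' := by simp
      map_mul' := fun g h => by simp [zpow_add, pow_add]; ring }

instance : Nontrivial (Rr 1 ⧸ idealUVLamMu) :=
  Ideal.Quotient.nontrivial_of_le_ker signRr.toRingHom <| by
    simp [idealUVLamMu, Ideal.span_le, Set.insert_subset_iff, signRr, Uc, Vc, lamC, muC,
      AddMonoidAlgebra.lift_single]

lemma lmwC_mul_lmwInvC {r : ℕ} (m : Fin r) (wz : ℤ) : lmwC m wz * lmwInvC m wz = 1 := by
  rw [lmwC, lmwInvC, AddMonoidAlgebra.single_mul_single, one_mul, AddMonoidAlgebra.one_def]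
  congr 1
  simp [← Pi.single_add]

lemma isUnit_lmwC {r : ℕ} (m : Fin r) (wz : ℤ) : IsUnit (lmwC m wz) :=
  .of_mul_eq_one _ (lmwC_mul_lmwInvC m wz)

namespace FreeAlgebra

variable {R : Type} [CommRing R] {X : Type}

/-- `x ↦ !![ε x, ∂ₐ x; 0, x]`, where `ε` kills the generators and `∂ₐ` is the Fox
derivative along `a`, which satisfies `∂ₐ (x * y) = ε x * ∂ₐ y + ∂ₐ x * y`. -/
def foxMatrix (a : X) : FreeAlgebra R X →ₐ[R] Matrix (Fin 2) (Fin 2) (FreeAlgebra R X) :=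
  lift R fun g => !![0, if g = a then 1 else 0; 0, ι R g]

lemma foxMatrix_one_zero_and_one_one (a : X) (x : FreeAlgebra R X) :
    foxMatrix a x 1 0 = 0 ∧ foxMatrix a x 1 1 = x := by
  induction x using FreeAlgebra.induction with
  | grade0 r => simp [Matrix.algebraMap_matrix_apply]
  | grade1 g => simp [foxMatrix]
  | mul x y hx hy => simp [Matrix.mul_apply, Fin.sum_univ_two, hx, hy]
  | add x y hx hy => simp [hx, hy]

lemma foxMatrix_ι_mul_zero_one (a g : X) (x : FreeAlgebra R X) :
    foxMatrix a (ι R g * x) 0 1 = if g = a then x else 0 := by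
  rw [map_mul, Matrix.mul_apply, Fin.sum_univ_two, (foxMatrix_one_zero_and_one_one a x).2]
  simp [foxMatrix]

lemma eq_zero_of_ι_mul_add_ι_mul_eq_zero {a b : X} (hab : a ≠ b) {x y : FreeAlgebra R X}
    (h : ι R a * x + ι R b * y = 0) : x = 0 := by
  have h01 := congrArg (fun z => foxMatrix a z 0 1) h
  simp only [map_add, Matrix.add_apply] at h01
  rwa [foxMatrix_ι_mul_zero_one, foxMatrix_ι_mul_zero_one, if_pos rfl, if_neg hab.symm,
    add_zero, map_zero, Matrix.zero_apply] at h01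

end FreeAlgebra

lemma wri_wSigma1Inv (α : Fin 2 → Fin 1) (m : Fin 1) : wri α m wSigma1Inv = -1 := by
  simp [wri, wriAux, wSigma1Inv, Subsingleton.elim _ m]

namespace TransData

variable (data : TransData 2 1 wSigma1Inv)

/-- From `φ_{σ₁}⁻¹ (a₀₁) = a₀₂ = a₀₁ Q₀₀ + a₀₂ Q₁₀` in the free algebra. -/
lemma Q_zero_zero_of_wSigma1Inv : data.Q 0 0 = 0 := by
  let k : SIdx 3 := embS ⟨0, by omega⟩
  obtain ⟨k', hk', -, -, -, hφ, -⟩ := data.hφs k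
  obtain rfl : k' = 2 := Fin.ext hk'
  have hφ02 : data.φs k (aG 0 2) = aG 0 1 := hφ 0 (by decide) (by decide)
  have hQ := data.hQ 0
  have hword : phiW data.φs (embW wSigma1Inv) = (data.φs k)⁻¹ := by
    simp [embW, wSigma1Inv, phiW, k]
  have hinv : (data.φs k)⁻¹ (aG 0 1) = aG 0 2 := by
    rw [← hφ02]
    exact (data.φs k).symm_apply_apply _
  rw [hword, Fin.sum_univ_two] at hQ
  change (data.φs k)⁻¹ (aG 0 1) = aG 0 1 * data.Q 0 0 + aG 0 2 * data.Q 1 0 at hQ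
  rw [hinv] at hQ
  refine FreeAlgebra.eq_zero_of_ι_mul_add_ι_mul_eq_zero (y := data.Q 1 0 - 1)
    (a := ⟨(0, 1), by decide⟩) (b := ⟨(0, 2), by decide⟩) (by simp) ?_
  have h01 : aG (0 : Fin 3) 1 = FreeAlgebra.ι _ ⟨(0, 1), by decide⟩ := dif_neg (by decide)
  have h02 : aG (0 : Fin 3) 2 = FreeAlgebra.ι _ ⟨(0, 2), by decide⟩ := dif_neg (by decide)
  rw [← h01, ← h02, mul_sub, mul_one, ← add_sub_assoc, ← hQ, sub_self]

lemma D_c_zero_zero_of_wSigma1Inv :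
    data.D (FreeAlgebra.ι _ (GenIdx.c 0 0)) =
      cm (1 + muC (data.α 0) 1 * Vc) * cm (lmwC (data.α 0) (-1)) +
        cm Uc * Xa 0 1 * data.θ (data.Q 1 0) := by
  have hlead : leading data.α 0 := fun j _ => Fin.zero_le j
  rw [show FreeAlgebra.ι _ (GenIdx.c 0 0) = Cmat (n := 2) (r := 1) 0 0 from rfl, data.hDC]
  simp [Matrix.mul_apply, Fin.sum_univ_two, lamMat, hlead, wri_wSigma1Inv, AVmat, AUmat,
    Q_zero_zero_of_wSigma1Inv]

/-- `∂ c₀₀ ≡ λ μ⁻¹` modulo `(U, V)`, a unit. -/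
lemma map_D_c_zero_zero_ne_zero {S : Type} [Ring S] [Nontrivial S] (f : FA 2 1 →+* S)
    (hU : f (cm Uc) = 0) (hV : f (cm Vc) = 0) :
    f (data.D (FreeAlgebra.ι _ (GenIdx.c 0 0))) ≠ 0 := by
  have hunit : IsUnit (f (cm (lmwC (data.α 0) (-1)))) := ((isUnit_lmwC _ _).map _).map f
  rw [D_c_zero_zero_of_wSigma1Inv]
  unfold cm at *
  simpa only [map_add, map_mul, map_one, hU, hV, mul_zero, zero_mul, add_zero,
    one_mul] using hunit.ne_zero

lemma not_hasAugmentation_toF_of_wSigma1Inv {S : Type} [CommRing S] [Nontrivial S]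
    [Algebra (Rr 1) S] (hU : algebraMap (Rr 1) S Uc = 0) (hV : algebraMap (Rr 1) S Vc = 0) :
    ¬ HasAugmentation S data.toF := by
  rintro ⟨ε, hε⟩
  exact data.map_D_c_zero_zero_ne_zero ε.toRingHom ((ε.commutes _).trans hU)
    ((ε.commutes _).trans hV) (hε _)

lemma not_hasAugmentation_of_wSigma1Inv {S : Type} [CommRing S] [Nontrivial S] [Algebra RL S]
    (π : Rr 1 →+* RL) (hπU : π Uc = 0) (hπV : π Vc = 0)
    (θ : FA 2 1 →+* FreeAlgebra RL (GenIdx 2))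
    (hθ : ∀ x : Rr 1, θ (algebraMap _ _ x) = algebraMap _ _ (π x))
    (D : FreeAlgebra RL (GenIdx 2) →ₗ[RL] FreeAlgebra RL (GenIdx 2))
    (hD : ∀ g : GenIdx 2, D (FreeAlgebra.ι _ g) = θ (data.D (FreeAlgebra.ι _ g))) :
    ¬ HasAugmentation S (⟨GenIdx 2, gdeg, D⟩ : FDGA RL) := by
  rintro ⟨ε, hε⟩
  have hcoeff : ∀ x, π x = 0 → ε (θ (cm x)) = 0 := fun x hx => by
    rw [cm, hθ, hx, map_zero, map_zero]
  refine data.map_D_c_zero_zero_ne_zero (ε.toRingHom.comp θ) (hcoeff _ hπU) (hcoeff _ hπV) ?_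
  have h := hε (GenIdx.c 0 0)
  rwa [show (⟨GenIdx 2, gdeg, D⟩ : FDGA RL).D = D from rfl, hD] at h

end TransData

/-- Let `(A, ∂̂̂)` be the DGA over `ℤ[λ^{±1}, μ^{±1}]` freely
generated by `c` (degree 1) and `e` (degree 2) with `∂̂̂c = λ + μ`, `∂̂̂e = 0` (the
`(U,V) = (0,0)` specialization of the transverse DGA of the trivial 1-braid).  Its
degree-0 homology is isomorphic to `ℤ[λ^{±1}, μ^{±1}]/(λ + μ) ≠ 0`; in particular the
homology of `(A, ∂̂̂)` is nontrivial, so `(A, ∂̂̂)` is not stable tame isomorphic to the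
`(U,V) = (0,0)` specialization of the transverse DGA of `σ₁⁻¹ ∈ B₂` (whose homology
vanishes).  Hence the filtered transverse DGAs of the trivial 1-braid and of `σ₁⁻¹`
are not filtered stable tame isomorphic, distinguishing the transverse unknots of
self-linking numbers −1 and −3. -/
theorem unknot_hathat_distinguishes
    (Dh : FreeAlgebra RL CE →ₗ[RL] FreeAlgebra RL CE)
    (hLeibh : IsLeibniz cedeg Dh)
    (hDhc : Dh (FreeAlgebra.ι _ CE.c) = algebraMap RL _ (lm 1 0 + lm 0 1))
    (hDhe : Dh (FreeAlgebra.ι _ CE.e) = 0) :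
    (Nonempty (H0 cedeg Dh ≃ₗ[RL] (RL ⧸ Ideal.span {lm 1 0 + lm 0 1})) ∧
      Nontrivial (RL ⧸ Ideal.span {lm 1 0 + lm 0 1}) ∧
      Nontrivial (H0 cedeg Dh) ∧
      (∃ x : FreeAlgebra RL CE, Dh x = 0 ∧ x ∉ Set.range Dh)) ∧
    (∀ (data : TransData 2 1 wSigma1Inv)
      (π : Rr 1 →+* RL),
      (∀ z : ℤ, π (lamC 0 z) = lm z 0) → (∀ z : ℤ, π (muC 0 z) = lm 0 z) →
      π Uc = 0 → π Vc = 0 →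
      ∀ (θ : FA 2 1 →+* FreeAlgebra RL (GenIdx 2)),
      (∀ x : Rr 1, θ (algebraMap _ _ x) = algebraMap _ _ (π x)) →
      (∀ g : GenIdx 2, θ (FreeAlgebra.ι _ g) = FreeAlgebra.ι _ g) →
      ∀ (Dhh : FreeAlgebra RL (GenIdx 2) →ₗ[RL] FreeAlgebra RL (GenIdx 2)),
      IsLeibniz gdeg Dhh →
      (∀ g : GenIdx 2, Dhh (FreeAlgebra.ι _ g) = θ (data.D (FreeAlgebra.ι _ g))) →
      ¬ IsStableTame (⟨CE, cedeg, Dh⟩ : FDGA RL) (⟨GenIdx 2, gdeg, Dhh⟩ : FDGA RL)) ∧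
    (∀ (D1 : FreeAlgebra (Rr 1) CE →ₗ[Rr 1] FreeAlgebra (Rr 1) CE),
      IsLeibniz cedeg D1 →
      D1 (FreeAlgebra.ι _ CE.c) =
        algebraMap (Rr 1) _ (Uc + lamC 0 1 + lamC 0 1 * muC 0 1 * Vc + muC 0 1) →
      D1 (FreeAlgebra.ι _ CE.e) = 0 →
      ∀ (data : TransData 2 1 wSigma1Inv),
        ¬ IsStableTame (⟨CE, cedeg, D1⟩ : FDGA (Rr 1)) data.toF) := by
  have hcedeg : ∀ i, cedeg i ≠ 0 := by rintro (_ | _) <;> decide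
  have hH0 : Nonempty (H0 cedeg Dh ≃ₗ[RL] (RL ⧸ Ideal.span {lm 1 0 + lm 0 1})) :=
    ⟨(H0.equivQuotient hcedeg hLeibh).trans
      (Submodule.quotEquivOfEq _ _ (comap_range_eq_span_of_CE hLeibh hDhc hDhe))⟩
  have hAug := hasAugmentation_CE (RL ⧸ Ideal.span {lm 1 0 + lm 0 1})
    (Ideal.Quotient.eq_zero_iff_mem.2 (Ideal.mem_span_singleton_self _)) hDhc hDhe
  refine ⟨⟨hH0, inferInstance, hH0.some.toEquiv.nontrivial, 1, hLeibh.map_one, ?_⟩, ?_, ?_⟩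
  · rintro ⟨y, hy⟩
    obtain ⟨ε, hε⟩ := hAug
    simpa [hy] using hLeibh.map_apply_eq_zero ε hε y
  · intro data π _ _ hπU hπV θ hθ _ Dhh _ hDhh
    exact not_isStableTame_of_hasAugmentation hLeibh hAug
      (data.not_hasAugmentation_of_wSigma1Inv π hπU hπV θ hθ Dhh hDhh)
  · intro D1 hD1 hc he data
    exact not_isStableTame_of_hasAugmentation hD1
      (hasAugmentation_CE _ (Ideal.Quotient.eq_zero_iff_mem.2 unknot_constant_mem_idealUVLamMu)
        hc he)
      (data.not_hasAugmentation_toF_of_wSigma1Inv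
        (Ideal.Quotient.eq_zero_iff_mem.2 Uc_mem_idealUVLamMu)
        (Ideal.Quotient.eq_zero_iff_mem.2 Vc_mem_idealUVLamMu))
end
end
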